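/- arXiv:1507.04917 — 5 statements merged into one kernel-verified Lean document; each statement's English description precedes it below -/
import Mathlib

section
/- Let s and d be positive integers and let p be an odd prime such that p ≥ d+2 and p−1 divides none of ds and of ks+1 for k = 1,…,d. If the weight ds is even, then H_{p−1}({s}^d) ≡ 0 (mod p); if ds is odd, then H_{p−1}({s}^d) ≡ 0 (mod p²). Here {s}^d denotes the composition (s,s,…,s) with s repeated d times. -/
open scoped BigOperators

/-- Alternating multiple harmonic sum `H_n(𝐬)` where `𝐬` is a list of pairs
`(sⱼ, εⱼ)` (exponent, sign):
`H_n(𝐬) = Σ_{n ≥ k₁ > ⋯ > k_d ≥ 1} Π εⱼ^{kⱼ} / kⱼ^{sⱼ}`. -/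
def AMHS : ℕ → List (ℕ × ℚ) → ℚ
  | _, [] => 1
  | n, (s, ε) :: t => ∑ k ∈ Finset.Icc 1 n, ε ^ k / (k : ℚ) ^ s * AMHS (k - 1) t

/-- Alternating multiple harmonic star sum `H⋆_n(𝐬)` (indices weakly decreasing). -/
def AMHSstar : ℕ → List (ℕ × ℚ) → ℚ
  | _, [] => 1
  | n, (s, ε) :: t => ∑ k ∈ Finset.Icc 1 n, ε ^ k / (k : ℚ) ^ s * AMHSstar k t

/-- A list of pairs is a signed composition: positive exponents, signs `±1`. -/
def IsSignedComp (l : List (ℕ × ℚ)) : Prop := ∀ x ∈ l, 0 < x.1 ∧ (x.2 = 1 ∨ x.2 = -1)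

/-- `a ≡ b (mod p^ℓ)` for rationals: the `p`-adic valuation of `a - b` is at least `ℓ`. -/
def RatModEq (p ℓ : ℕ) (a b : ℚ) : Prop := a = b ∨ (ℓ : ℤ) ≤ padicValRat p (a - b)

/-- View a composition of positive integers as a signed composition with all signs `+1`. -/
def posComp (l : List ℕ) : List (ℕ × ℚ) := l.map (fun s => (s, 1))

/-!
Clearing denominators, `H_{p-1}({s}^d) = e_m(1^s, …, (p-1)^s) / ((p-1)!)^s` with `m = p-1-d`,
and the numerator is `F(0)` for `F(t) = ∑_{#A = m} ∏_{k ∈ A} (t + k)^s`. Modulo `p`, scaling an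
`m`-subset of `(ℤ/p)ˣ` by a unit `c` multiplies the summand of `F(0)` by `c^{sm}` and that of
`F'(0)` by `c^{sm-1}`; as `p - 1` divides neither exponent, `F(0) ≡ F'(0) ≡ 0 (mod p)`.
The reflection `k ↦ p - k` gives `F(-p) = (-1)^{sm} F(0)`. When `ds` is odd so is `sm`, and
the Taylor expansion `F(-p) ≡ F(0) - p F'(0) (mod p²)` turns this into `2 F(0) ≡ 0 (mod p²)`.
-/

open Finset Polynomial

namespace Finset

variable {α β M : Type*} [AddCommMonoid M]

theorem sum_powersetCard_succ_insert [DecidableEq α] {s : Finset α} {a : α} (ha : a ∉ s)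
    (n : ℕ) (f : Finset α → M) :
    ∑ t ∈ (insert a s).powersetCard (n + 1), f t =
      ∑ t ∈ s.powersetCard (n + 1), f t + ∑ t ∈ s.powersetCard n, f (insert a t) := by
  rw [powersetCard_succ_insert ha, sum_union, sum_image]
  · exact insert_erase_invOn.2.injOn.mono fun t ht ↦ notMem_mono (mem_powersetCard.1 ht).1 ha
  · aesop (add simp [disjoint_left, insert_subset_iff])

theorem powersetCard_image [DecidableEq β] {s : Finset α} {f : α → β} (hf : Set.InjOn f s)
    (n : ℕ) : (s.image f).powersetCard n = (s.powersetCard n).image (·.image f) := by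
  ext u
  simp only [mem_powersetCard, mem_image]
  constructor
  · rintro ⟨hu, rfl⟩
    obtain ⟨t, ht, rfl⟩ := subset_image_iff.1 hu
    exact ⟨t, ⟨ht, (card_image_of_injOn (hf.mono ht)).symm⟩, rfl⟩
  · rintro ⟨t, ⟨ht, rfl⟩, rfl⟩
    exact ⟨image_subset_image ht, card_image_of_injOn (hf.mono ht)⟩

theorem sum_powersetCard_image [DecidableEq β] {s : Finset α} {f : α → β}
    (hf : Set.InjOn f s) (n : ℕ) (g : Finset β → M) :
    ∑ t ∈ (s.image f).powersetCard n, g t = ∑ t ∈ s.powersetCard n, g (t.image f) := by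
  rw [powersetCard_image hf, sum_image]
  exact (image_injOn_powerset_of_injOn hf).mono fun t ht ↦
    mem_powerset.2 (mem_powersetCard.1 ht).1

theorem sum_powersetCard_sdiff [DecidableEq α] {s : Finset α} {n : ℕ} (hn : n ≤ #s)
    (g : Finset α → M) :
    ∑ t ∈ s.powersetCard n, g (s \ t) = ∑ t ∈ s.powersetCard (#s - n), g t := by
  refine sum_nbij' (s \ ·) (s \ ·) ?_ ?_ ?_ ?_ (fun _ _ ↦ rfl)
  all_goals
    intro t ht
    simp only [mem_powersetCard] at ht ⊢
  · exact ⟨sdiff_subset, by rw [card_sdiff_of_subset ht.1, ht.2]⟩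
  · exact ⟨sdiff_subset, by rw [card_sdiff_of_subset ht.1, ht.2]; omega⟩
  · exact sdiff_sdiff_eq_self ht.1
  · exact sdiff_sdiff_eq_self ht.1

theorem sum_powersetCard_prod_inv_mul_prod {ι K : Type*} [DecidableEq ι] [Field K]
    {s : Finset ι} {f : ι → K} (hf : ∀ i ∈ s, f i ≠ 0) {d : ℕ} (hd : d ≤ #s) :
    (∑ A ∈ s.powersetCard d, ∏ i ∈ A, (f i)⁻¹) * ∏ i ∈ s, f i =
      ∑ B ∈ s.powersetCard (#s - d), ∏ i ∈ B, f i := by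
  rw [← sum_powersetCard_sdiff hd, sum_mul]
  refine sum_congr rfl fun A hA ↦ ?_
  have hAs := (mem_powersetCard.1 hA).1
  rw [← prod_sdiff hAs, mul_left_comm, ← prod_mul_distrib,
    prod_congr rfl fun i hi ↦ inv_mul_cancel₀ (hf i (hAs hi)), prod_const_one, mul_one]

theorem sum_prod_erase_pow_mul {ι K : Type*} [DecidableEq ι] [Field K] {A : Finset ι}
    {f : ι → K} (hf : ∀ i ∈ A, f i ≠ 0) (s : ℕ) :
    ∑ j ∈ A, (∏ k ∈ A.erase j, f k ^ s) * (s * f j ^ (s - 1)) =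
      s * (∏ k ∈ A, f k ^ s) * ∑ j ∈ A, (f j)⁻¹ := by
  rw [mul_sum]
  refine sum_congr rfl fun j hj ↦ ?_
  rw [← mul_prod_erase A _ hj]
  rcases s with _ | s
  · simp
  · rw [Nat.add_sub_cancel, pow_succ]
    field_simp [hf j hj]

end Finset

theorem FiniteField.sum_powersetCard_eq_zero_of_homogeneous {K : Type*} [Field K] [Fintype K]
    [DecidableEq K] {m : ℕ} {r : ℤ} (hr : ¬ ((Fintype.card K : ℤ) - 1) ∣ r)
    (G : Finset K → K)
    (hG : ∀ c : K, c ≠ 0 → ∀ A : Finset K, #A = m → G (A.image (c * ·)) = c ^ r * G A) :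
    ∑ A ∈ ({0}ᶜ : Finset K).powersetCard m, G A = 0 := by
  obtain ⟨c, hc⟩ : ∃ c : Kˣ, c ^ r ≠ 1 := by
    by_contra! h
    apply hr
    rw [← Nat.cast_pred Fintype.card_pos, ← Fintype.card_units, ← Nat.card_eq_fintype_card,
      ← IsCyclic.exponent_eq_card]
    exact Group.exponent_dvd_iff_forall_zpow_eq_one.2 h
  have hcr : (c : K) ^ r ≠ 1 := by
    rwa [← Units.val_zpow_eq_zpow_val, Ne, Units.val_eq_one]
  have himage : ({0}ᶜ : Finset K).image ((c : K) * ·) = {0}ᶜ := by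
    ext x
    simp only [mem_image, mem_compl, mem_singleton]
    refine ⟨?_, fun hx ↦ ⟨c⁻¹ * x, by simpa using hx, by simp⟩⟩
    rintro ⟨y, hy, rfl⟩
    simpa using hy
  have hscale : ∑ A ∈ ({0}ᶜ : Finset K).powersetCard m, G A =
      (c : K) ^ r * ∑ A ∈ ({0}ᶜ : Finset K).powersetCard m, G A := by
    conv_lhs => rw [← himage]
    rw [sum_powersetCard_image (mul_right_injective₀ c.ne_zero).injOn, mul_sum]
    exact sum_congr rfl fun A hA ↦ hG c c.ne_zero A (mem_powersetCard.1 hA).2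
  have : ((c : K) ^ r - 1) * ∑ A ∈ ({0}ᶜ : Finset K).powersetCard m, G A = 0 := by
    rw [sub_mul, ← hscale, one_mul, sub_self]
  exact (mul_eq_zero.1 this).resolve_left (sub_ne_zero.2 hcr)

namespace ZMod

theorem natCast_ne_zero_of_mem_Icc {p k : ℕ} (hk : k ∈ Icc 1 (p - 1)) : (k : ZMod p) ≠ 0 := by
  rw [mem_Icc] at hk
  exact (natCast_eq_zero_iff k p).not.2 (Nat.not_dvd_of_pos_of_lt hk.1 (by omega))

theorem injOn_natCast_Icc (p : ℕ) : Set.InjOn (Nat.cast : ℕ → ZMod p) (Icc 1 (p - 1)) := by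
  intro a ha b hb hab
  simp only [coe_Icc, Set.mem_Icc] at ha hb
  simpa [val_natCast_of_lt (show a < p by omega), val_natCast_of_lt (show b < p by omega)]
    using congrArg val hab

theorem image_natCast_Icc (p : ℕ) [NeZero p] :
    (Icc 1 (p - 1)).image (Nat.cast : ℕ → ZMod p) = {0}ᶜ := by
  ext x
  simp only [mem_image, mem_compl, mem_singleton]
  refine ⟨fun ⟨k, hk, hkx⟩ ↦ hkx ▸ natCast_ne_zero_of_mem_Icc hk,
    fun hx ↦ ⟨x.val, ?_, natCast_zmod_val x⟩⟩
  have := val_lt x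
  have := (val_ne_zero x).2 hx
  rw [mem_Icc]
  omega

theorem sum_powersetCard_Icc_eq_zero_of_homogeneous {p : ℕ} [Fact p.Prime] {m : ℕ} {r : ℤ}
    (hr : ¬ ((p - 1 : ℕ) : ℤ) ∣ r) (G : Finset (ZMod p) → ZMod p)
    (hG : ∀ c : ZMod p, c ≠ 0 → ∀ A : Finset (ZMod p), #A = m →
      G (A.image (c * ·)) = c ^ r * G A) :
    ∑ A ∈ (Icc 1 (p - 1)).powersetCard m, G (A.image Nat.cast) = 0 := by
  rw [← sum_powersetCard_image (injOn_natCast_Icc p), image_natCast_Icc]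
  refine FiniteField.sum_powersetCard_eq_zero_of_homogeneous ?_ G hG
  rwa [card, ← Nat.cast_pred (NeZero.pos p)]

end ZMod

noncomputable def shiftedPowEsymm (s n m : ℕ) : ℤ[X] :=
  ∑ A ∈ (Icc 1 n).powersetCard m, ∏ k ∈ A, (X + C (k : ℤ)) ^ s

section shiftedPowEsymm

variable (s n m : ℕ)

theorem eval_zero_shiftedPowEsymm :
    (shiftedPowEsymm s n m).eval 0 = ∑ A ∈ (Icc 1 n).powersetCard m, ∏ k ∈ A, (k : ℤ) ^ s := by
  simp [shiftedPowEsymm, eval_finsetSum, eval_prod]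

theorem eval_zero_derivative_shiftedPowEsymm :
    (derivative (shiftedPowEsymm s n m)).eval 0 = ∑ A ∈ (Icc 1 n).powersetCard m,
      ∑ j ∈ A, (∏ k ∈ A.erase j, (k : ℤ) ^ s) * (s * (j : ℤ) ^ (s - 1)) := by
  simp [shiftedPowEsymm, derivative_prod_finset, derivative_pow, eval_finsetSum,
    eval_prod]

theorem eval_neg_succ_shiftedPowEsymm :
    (shiftedPowEsymm s n m).eval (-(n + 1 : ℤ)) =
      (-1) ^ (s * m) * (shiftedPowEsymm s n m).eval 0 := by
  have hinj : Set.InjOn (n + 1 - ·) (Icc 1 n) := by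
    intro a ha b hb h
    simp only [coe_Icc, Set.mem_Icc] at ha hb h
    omega
  have himage : (Icc 1 n).image (n + 1 - ·) = Icc 1 n := by
    ext k
    simp only [mem_image, mem_Icc]
    exact ⟨by omega, fun hk ↦ ⟨n + 1 - k, by omega, by omega⟩⟩
  rw [eval_zero_shiftedPowEsymm, ← himage, sum_powersetCard_image hinj, mul_sum,
    shiftedPowEsymm, eval_finsetSum]
  refine sum_congr rfl fun A hA ↦ ?_
  obtain ⟨hAn, hAm⟩ := mem_powersetCard.1 hA
  rw [prod_image (hinj.mono hAn), eval_prod, pow_mul, ← hAm, ← prod_const, ← prod_mul_distrib]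
  refine prod_congr rfl fun k hk ↦ ?_
  have := (mem_Icc.1 (hAn hk)).2
  rw [Nat.cast_sub (by omega), ← mul_pow, eval_pow, eval_add, eval_X, eval_C]
  push_cast
  ring

end shiftedPowEsymm

theorem dvd_mul_sub_sub_iff_dvd_add {n d : ℕ} (s : ℕ) (hd : d ≤ n) (a : ℤ) :
    (n : ℤ) ∣ s * (n - d : ℕ) - a ↔ (n : ℤ) ∣ d * s + a := by
  rw [Nat.cast_sub hd, show (s : ℤ) * (n - d) - a = s * n - (d * s + a) by ring,
    dvd_sub_right (dvd_mul_left _ _)]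

section ModP

variable {p : ℕ} [Fact p.Prime] (s : ℕ) {d : ℕ}

theorem prime_dvd_eval_zero_shiftedPowEsymm (hd : d ≤ p - 1) (h : ¬ (p - 1) ∣ d * s) :
    (p : ℤ) ∣ (shiftedPowEsymm s (p - 1) (p - 1 - d)).eval 0 := by
  have hr : ¬ ((p - 1 : ℕ) : ℤ) ∣ s * (p - 1 - d : ℕ) := by
    simpa using (dvd_mul_sub_sub_iff_dvd_add s hd 0).not.2 (by exact_mod_cast h)
  rw [← ZMod.intCast_zmod_eq_zero_iff_dvd, eval_zero_shiftedPowEsymm,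
    ← ZMod.sum_powersetCard_Icc_eq_zero_of_homogeneous hr (fun B ↦ ∏ x ∈ B, x ^ s)]
  · push_cast
    refine sum_congr rfl fun A hA ↦ ?_
    rw [prod_image ((ZMod.injOn_natCast_Icc p).mono (mem_powersetCard.1 hA).1)]
  · intro c hc A hA
    rw [prod_image (mul_right_injective₀ hc).injOn, ← Nat.cast_mul, zpow_natCast, ← hA]
    simp only [mul_pow, prod_mul_distrib, prod_const, pow_mul]

theorem prime_dvd_eval_zero_derivative_shiftedPowEsymm (hd : d ≤ p - 1)
    (h : ¬ (p - 1) ∣ d * s + 1) :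
    (p : ℤ) ∣ (derivative (shiftedPowEsymm s (p - 1) (p - 1 - d))).eval 0 := by
  have hr : ¬ ((p - 1 : ℕ) : ℤ) ∣ s * (p - 1 - d : ℕ) - 1 :=
    (dvd_mul_sub_sub_iff_dvd_add s hd 1).not.2 (by exact_mod_cast h)
  rw [← ZMod.intCast_zmod_eq_zero_iff_dvd, eval_zero_derivative_shiftedPowEsymm,
    ← ZMod.sum_powersetCard_Icc_eq_zero_of_homogeneous hr
      (fun B ↦ (s : ZMod p) * (∏ x ∈ B, x ^ s) * ∑ x ∈ B, x⁻¹)]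
  · push_cast
    refine sum_congr rfl fun A hA ↦ ?_
    have hA := (mem_powersetCard.1 hA).1
    have hinj := (ZMod.injOn_natCast_Icc p).mono hA
    rw [prod_image hinj, sum_image hinj,
      sum_prod_erase_pow_mul fun k hk ↦ ZMod.natCast_ne_zero_of_mem_Icc (hA hk)]
  · intro c hc A hA
    have hinj : Set.InjOn (c * ·) A := (mul_right_injective₀ hc).injOn
    rw [prod_image hinj, sum_image hinj, zpow_sub_one₀ hc, ← Nat.cast_mul, zpow_natCast, ← hA]
    simp only [mul_pow, prod_mul_distrib, prod_const, mul_inv, ← mul_sum, pow_mul]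
    ring

end ModP

theorem AMHS_replicate (s : ℕ) (ε : ℚ) (n d : ℕ) :
    AMHS n (List.replicate d (s, ε)) =
      ∑ A ∈ (Icc 1 n).powersetCard d, ∏ k ∈ A, ε ^ k / (k : ℚ) ^ s := by
  induction n generalizing d with
  | zero =>
    cases d with
    | zero => simp [AMHS]
    | succ d =>
      rw [powersetCard_eq_empty.2 (by simp)]
      simp [AMHS, List.replicate_succ]
  | succ n ih =>
    cases d with
    | zero => simp [AMHS]
    | succ d =>
      have hn : n + 1 ∉ Icc 1 n := by simp
      rw [← insert_Icc_right_eq_Icc_add_one (by omega),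
        sum_powersetCard_succ_insert hn, ← ih, List.replicate_succ, AMHS, AMHS,
        sum_Icc_succ_top (by omega), Nat.add_sub_cancel, ih, mul_sum]
      congr 1
      refine sum_congr rfl fun A hA ↦ ?_
      rw [prod_insert fun h ↦ hn ((mem_powersetCard.1 hA).1 h)]

theorem AMHS_replicate_eq_eval_zero_div (s : ℕ) {n d : ℕ} (hd : d ≤ n) :
    AMHS n (List.replicate d (s, 1)) =
      ((shiftedPowEsymm s n (n - d)).eval 0 : ℤ) / ((∏ k ∈ Icc 1 n, (k : ℤ) ^ s : ℤ) : ℚ) := by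
  have hne : ∀ k ∈ Icc 1 n, (k : ℚ) ^ s ≠ 0 := fun k hk ↦
    pow_ne_zero _ (Nat.cast_ne_zero.2 (by have := (mem_Icc.1 hk).1; omega))
  push_cast
  rw [eq_div_iff (prod_ne_zero_iff.2 hne), AMHS_replicate, eval_zero_shiftedPowEsymm]
  simp only [one_pow, one_div]
  push_cast
  rw [sum_powersetCard_prod_inv_mul_prod hne (by simpa using hd), Nat.card_Icc,
    Nat.add_sub_cancel]

theorem not_prime_dvd_prod_Icc_pow {p : ℕ} [Fact p.Prime] (s : ℕ) :
    ¬ (p : ℤ) ∣ ∏ k ∈ Icc 1 (p - 1), (k : ℤ) ^ s := by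
  rw [← ZMod.intCast_zmod_eq_zero_iff_dvd]
  push_cast
  exact prod_ne_zero_iff.2 fun k hk ↦ pow_ne_zero s (ZMod.natCast_ne_zero_of_mem_Icc hk)

theorem ratModEq_intCast_div_zero {p ℓ : ℕ} [Fact p.Prime] {N Q : ℤ} (hN : (p : ℤ) ^ ℓ ∣ N)
    (hQ : ¬ (p : ℤ) ∣ Q) : RatModEq p ℓ (N / Q) 0 := by
  rcases eq_or_ne N 0 with rfl | hN0
  · simp [RatModEq]
  have hℓ := ((padicValInt_dvd_iff ℓ N).1 hN).resolve_left hN0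
  right
  rw [sub_zero, padicValRat.div (by exact_mod_cast hN0) (Int.cast_ne_zero.2 (by rintro rfl; exact hQ (dvd_zero _))),
    padicValRat.of_int, padicValRat.of_int, padicValInt.eq_zero_of_not_dvd hQ,
    Nat.cast_zero, sub_zero]
  exact_mod_cast hℓ

theorem odd_mul_sub_of_even {n d s : ℕ} (hn : Even n) (hd : d ≤ n) (hds : Odd (d * s)) :
    Odd (s * (n - d)) := by
  rw [Nat.mul_sub]
  exact Nat.Even.sub_odd (Nat.mul_le_mul_left s hd) (hn.mul_left s) (mul_comm d s ▸ hds)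

theorem Polynomial.sq_dvd_two_mul_eval_zero {R : Type*} [CommRing R] {F : R[X]} {q : R}
    (hF : F.eval (-q) = -F.eval 0) (hF' : q ∣ (derivative F).eval 0) :
    q ^ 2 ∣ 2 * F.eval 0 := by
  obtain ⟨k, hk⟩ := binomExpansion F 0 (-q)
  obtain ⟨a, ha⟩ := hF'
  rw [zero_add, hF, ha] at hk
  exact ⟨a - k, by linear_combination -hk⟩

theorem homogeneous_wolstenholme_general (s d : ℕ) (hd : 0 < d)
    (p : ℕ) (hp : p.Prime) (hodd : Odd p) (hpd : d + 2 ≤ p)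
    (h1 : ¬ (p - 1) ∣ d * s) (h2 : ∀ k, 1 ≤ k → k ≤ d → ¬ (p - 1) ∣ k * s + 1) :
    (Even (d * s) → RatModEq p 1 (AMHS (p - 1) (List.replicate d (s, (1 : ℚ)))) 0) ∧
    (Odd (d * s) → RatModEq p 2 (AMHS (p - 1) (List.replicate d (s, (1 : ℚ)))) 0) := by
  have := Fact.mk hp
  have hdp : d ≤ p - 1 := by omega
  have hQ := not_prime_dvd_prod_Icc_pow (p := p) s
  rw [AMHS_replicate_eq_eval_zero_div s hdp]
  refine ⟨fun _ ↦ ratModEq_intCast_div_zero ?_ hQ, fun hds ↦ ratModEq_intCast_div_zero ?_ hQ⟩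
  · simpa using prime_dvd_eval_zero_shiftedPowEsymm s hdp h1
  · set F := shiftedPowEsymm s (p - 1) (p - 1 - d)
    have hF : F.eval (-(p : ℤ)) = -F.eval 0 := by
      have hsm : Odd (s * (p - 1 - d)) :=
        odd_mul_sub_of_even (Nat.Odd.sub_odd hodd odd_one) hdp hds
      have := eval_neg_succ_shiftedPowEsymm s (p - 1) (p - 1 - d)
      rwa [hsm.neg_one_pow, Nat.cast_pred hp.pos, sub_add_cancel, neg_one_mul] at this
    have hcop : IsCoprime ((p : ℤ) ^ 2) 2 :=
      (Nat.isCoprime_iff_coprime.2 hodd.coprime_two_right).pow_left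
    exact hcop.dvd_of_dvd_mul_left <| sq_dvd_two_mul_eval_zero hF <|
      prime_dvd_eval_zero_derivative_shiftedPowEsymm s hdp (h2 d hd le_rfl)

/-- Theorem 1.1 / `thm:homogeneousWols`.
For positive integers `s, d` and an odd prime `p` with `p ≥ d + 2` such that `p - 1`
divides none of `d*s` and of `k*s + 1` for `k = 1, …, d`, the homogeneous multiple
harmonic sum `H_{p-1}({s}^d)` vanishes mod `p` if `d*s` is even, and mod `p²` if
`d*s` is odd. -/
theorem homogeneous_wolstenholme (s d : ℕ) (hs : 0 < s) (hd : 0 < d)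
    (p : ℕ) (hp : p.Prime) (hodd : Odd p) (hpd : d + 2 ≤ p)
    (h1 : ¬ (p - 1) ∣ d * s) (h2 : ∀ k, 1 ≤ k → k ≤ d → ¬ (p - 1) ∣ k * s + 1) :
    (Even (d * s) → RatModEq p 1 (AMHS (p - 1) (List.replicate d (s, (1 : ℚ)))) 0) ∧
    (Odd (d * s) → RatModEq p 2 (AMHS (p - 1) (List.replicate d (s, (1 : ℚ)))) 0) :=
  homogeneous_wolstenholme_general s d hd p hp hodd hpd h1 h2
end

section
/- Fix a positive integer ℓ. For each prime p let R_p = ℤ/p^ℓℤ, and let 𝒜_ℓ be the quotient of the product ring Π_p R_p (product over all primes p) by the ideal ⊕_p R_p of elements with finite support. Define ι_ℓ : ℚ → 𝒜_ℓ by sending r to the class of the family (ι_{p,ℓ}(r))_p, where ι_{p,ℓ}(r) = r mod p^ℓ if the p-adic valuation of r is ≥ 0 (interpreting r mod p^ℓ via the ring of p-integral rationals), and ι_{p,ℓ}(r) = 0 otherwise, with ι_ℓ(0) = 0. Then ι_ℓ is an injective ring homomorphism, i.e., it embeds ℚ into 𝒜_ℓ as a ℚ-algebra. -/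
/-!
At a prime `p` not dividing the denominator of `r`, the rational `r` is a `p`-adic integer and
`ι_{p,ℓ}(r)` is its image under the reduction `ℤ_p → ℤ/p^ℓℤ`, a ring homomorphism. For given
`a, b` this covers all but finitely many primes, so `ι_ℓ` is additive and multiplicative modulo
finitely supported families. A ring homomorphism from the field `ℚ` is injective as soon as its
target is nonzero, and `𝒜_ℓ` is nonzero because `1 ≠ 0` in `ℤ/p^ℓℤ` for `ℓ > 0` at each of the
infinitely many primes.
-/

open scoped Classical

/-- The product ring `Π_p ℤ/p^ℓℤ` over all primes `p`. -/
abbrev PrimeProd (ℓ : ℕ) : Type := ∀ p : Nat.Primes, ZMod ((p : ℕ) ^ ℓ)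

/-- The ideal `⊕_p ℤ/p^ℓℤ` of finitely supported families in `Π_p ℤ/p^ℓℤ`. -/
def finSuppIdeal (ℓ : ℕ) : Ideal (PrimeProd ℓ) where
  carrier := {x | {p : Nat.Primes | x p ≠ 0}.Finite}
  zero_mem' := by
    show ({p : Nat.Primes | (0 : PrimeProd ℓ) p ≠ 0}).Finite
    have h : {p : Nat.Primes | (0 : PrimeProd ℓ) p ≠ 0} = ∅ := by ext p; simp
    rw [h]; exact Set.finite_empty
  add_mem' := by
    intro a b ha hb
    refine (ha.union hb).subset ?_
    intro p hp
    simp only [Set.mem_setOf_eq, Set.mem_union] at hp ⊢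
    by_contra hc
    push_neg at hc
    exact hp (by simp [Pi.add_apply, hc.1, hc.2])
  smul_mem' := by
    intro c x hx
    refine hx.subset ?_
    intro p hp
    simp only [Set.mem_setOf_eq] at hp ⊢
    intro h
    exact hp (by simp [h])

/-- The adele-like ring `𝒜_ℓ = (Π_p ℤ/p^ℓℤ) / (⊕_p ℤ/p^ℓℤ)`. -/
abbrev AdeleLike (ℓ : ℕ) : Type := PrimeProd ℓ ⧸ finSuppIdeal ℓ

/-- The component map `ι_{p,ℓ} : ℚ → ℤ/p^ℓℤ`: if `ord_p(r) ≥ 0`, reduce `r`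
(which is then `p`-integral) mod `p^ℓ` as `num · den⁻¹`; otherwise send `r` to `0`.
(Note `ι_{p,ℓ}(0) = 0` since the numerator of `0` is `0`.) -/
noncomputable def iotaComp (ℓ : ℕ) (p : Nat.Primes) (r : ℚ) : ZMod ((p : ℕ) ^ ℓ) :=
  if 0 ≤ padicValRat p r then
    (r.num : ZMod ((p : ℕ) ^ ℓ)) * (r.den : ZMod ((p : ℕ) ^ ℓ))⁻¹
  else 0

/-- The diagonal map `ι_ℓ : ℚ → 𝒜_ℓ`. -/
noncomputable def iota (ℓ : ℕ) (r : ℚ) : AdeleLike ℓ :=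
  Ideal.Quotient.mk (finSuppIdeal ℓ) (fun p => iotaComp ℓ p r)

instance Nat.Primes.fact_prime (p : Nat.Primes) : Fact (p : ℕ).Prime := ⟨p.2⟩

theorem PadicInt.toZModPow_eq_of_coe_eq_ratCast {p : ℕ} [Fact p.Prime] (n : ℕ) {x : ℤ_[p]}
    {r : ℚ} (hx : (x : ℚ_[p]) = r) :
    PadicInt.toZModPow n x = (r.num : ZMod (p ^ n)) * (r.den : ZMod (p ^ n))⁻¹ := by
  have hden : IsUnit (r.den : ZMod (p ^ n)) := by
    simpa using (PadicInt.isUnit_den r (hx ▸ x.norm_le_one)).map (PadicInt.toZModPow n)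
  have hmul : x * r.den = r.num := by
    refine PadicInt.ext ?_
    push_cast
    rw [hx]
    exact_mod_cast Rat.mul_den_eq_num r
  calc PadicInt.toZModPow n x
      = PadicInt.toZModPow n x * r.den * (r.den : ZMod (p ^ n))⁻¹ := by
        rw [mul_assoc, ZMod.mul_inv_of_unit _ hden, mul_one]
    _ = r.num * (r.den : ZMod (p ^ n))⁻¹ := by
        rw [← map_natCast (PadicInt.toZModPow n), ← map_mul, hmul, map_intCast]

theorem iotaComp_eq_toZModPow (ℓ : ℕ) {p : Nat.Primes} {x : ℤ_[p]} {r : ℚ}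
    (hx : (x : ℚ_[p]) = r) : iotaComp ℓ p r = PadicInt.toZModPow ℓ x := by
  rw [PadicInt.toZModPow_eq_of_coe_eq_ratCast ℓ hx, iotaComp, if_pos]
  rw [← Padic.valuation_ratCast, ← Padic.norm_le_one_iff_val_nonneg, ← hx]
  exact x.norm_le_one

theorem exists_padicInt_coe_eq_of_not_dvd_den {p : ℕ} [Fact p.Prime] {r : ℚ}
    (h : ¬ p ∣ r.den) : ∃ x : ℤ_[p], (x : ℚ_[p]) = r :=
  ⟨⟨r, Padic.norm_rat_le_one h⟩, rfl⟩

section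

variable (ℓ : ℕ) {p : Nat.Primes} {a b : ℚ}

theorem iotaComp_add (ha : ¬ (p : ℕ) ∣ a.den) (hb : ¬ (p : ℕ) ∣ b.den) :
    iotaComp ℓ p (a + b) = iotaComp ℓ p a + iotaComp ℓ p b := by
  obtain ⟨x, hx⟩ := exists_padicInt_coe_eq_of_not_dvd_den ha
  obtain ⟨y, hy⟩ := exists_padicInt_coe_eq_of_not_dvd_den hb
  rw [iotaComp_eq_toZModPow ℓ hx, iotaComp_eq_toZModPow ℓ hy,
    iotaComp_eq_toZModPow ℓ (x := x + y) (by push_cast [hx, hy]; rfl), map_add]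

theorem iotaComp_mul (ha : ¬ (p : ℕ) ∣ a.den) (hb : ¬ (p : ℕ) ∣ b.den) :
    iotaComp ℓ p (a * b) = iotaComp ℓ p a * iotaComp ℓ p b := by
  obtain ⟨x, hx⟩ := exists_padicInt_coe_eq_of_not_dvd_den ha
  obtain ⟨y, hy⟩ := exists_padicInt_coe_eq_of_not_dvd_den hb
  rw [iotaComp_eq_toZModPow ℓ hx, iotaComp_eq_toZModPow ℓ hy,
    iotaComp_eq_toZModPow ℓ (x := x * y) (by push_cast [hx, hy]; rfl), map_mul]

end

theorem finite_setOf_primes_dvd {n : ℕ} (hn : n ≠ 0) : {p : Nat.Primes | (p : ℕ) ∣ n}.Finite :=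
  (n.primeFactors.finite_toSet.preimage Nat.Primes.coe_nat_injective.injOn).subset
    fun p hp => Nat.mem_primeFactors.2 ⟨p.2, hp, hn⟩

theorem mk_finSuppIdeal_eq_of_forall_not_dvd {ℓ n : ℕ} (hn : n ≠ 0) {x y : PrimeProd ℓ}
    (h : ∀ p : Nat.Primes, ¬ (p : ℕ) ∣ n → x p = y p) :
    Ideal.Quotient.mk (finSuppIdeal ℓ) x = Ideal.Quotient.mk (finSuppIdeal ℓ) y := by
  rw [Ideal.Quotient.eq]
  refine (finite_setOf_primes_dvd hn).subset fun p hp => ?_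
  by_contra hpn
  exact hp (sub_eq_zero.2 (h p hpn))

theorem nontrivial_adeleLike {ℓ : ℕ} (hℓ : 0 < ℓ) : Nontrivial (AdeleLike ℓ) := by
  refine Ideal.Quotient.nontrivial_iff.2 ((Ideal.ne_top_iff_one _).2 fun h => ?_)
  have hone (p : Nat.Primes) : (1 : ZMod ((p : ℕ) ^ ℓ)) ≠ 0 := by
    have : Nontrivial (ZMod ((p : ℕ) ^ ℓ)) :=
      ZMod.nontrivial_iff.2 (Nat.pow_eq_one.not.2 (by simp [p.2.ne_one, hℓ.ne']))
    exact one_ne_zero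
  exact Set.infinite_univ (h.subset fun p _ => hone p)

theorem iota_zero (ℓ : ℕ) : iota ℓ 0 = 0 := by
  simp [iota, iotaComp, ← Pi.zero_def]

theorem iota_one (ℓ : ℕ) : iota ℓ 1 = 1 := by
  simp [iota, iotaComp, ← Pi.one_def]

theorem iota_add (ℓ : ℕ) (a b : ℚ) : iota ℓ (a + b) = iota ℓ a + iota ℓ b := by
  rw [iota, iota, iota, ← map_add]
  exact mk_finSuppIdeal_eq_of_forall_not_dvd (n := a.den * b.den) (by positivity) fun p hp =>
    iotaComp_add ℓ (fun h => hp (h.mul_right _)) (fun h => hp (h.mul_left _))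

theorem iota_mul (ℓ : ℕ) (a b : ℚ) : iota ℓ (a * b) = iota ℓ a * iota ℓ b := by
  rw [iota, iota, iota, ← map_mul]
  exact mk_finSuppIdeal_eq_of_forall_not_dvd (n := a.den * b.den) (by positivity) fun p hp =>
    iotaComp_mul ℓ (fun h => hp (h.mul_right _)) (fun h => hp (h.mul_left _))

noncomputable def iotaRingHom (ℓ : ℕ) : ℚ →+* AdeleLike ℓ where
  toFun := iota ℓ
  map_zero' := iota_zero ℓ
  map_one' := iota_one ℓ
  map_add' := iota_add ℓ
  map_mul' := iota_mul ℓ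

/-- Proposition `prop:embed`. The map `ι_ℓ : ℚ → 𝒜_ℓ` is an
injective ring homomorphism, i.e. it embeds `ℚ` into `𝒜_ℓ` as a `ℚ`-algebra. -/
theorem iota_injective_ring_hom (ℓ : ℕ) (hℓ : 0 < ℓ) :
    iota ℓ 0 = 0 ∧ iota ℓ 1 = 1 ∧
    (∀ a b : ℚ, iota ℓ (a + b) = iota ℓ a + iota ℓ b) ∧
    (∀ a b : ℚ, iota ℓ (a * b) = iota ℓ a * iota ℓ b) ∧
    Function.Injective (iota ℓ) := by
  have := nontrivial_adeleLike hℓ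
  exact ⟨iota_zero ℓ, iota_one ℓ, iota_add ℓ, iota_mul ℓ, (iotaRingHom ℓ).injective⟩
end

section
/- Let p be an odd prime and let 𝐬 = ((s_1,ε_1),…,(s_d,ε_d)) be a signed composition, with reversal rev(𝐬) = ((s_d,ε_d),…,(s_1,ε_1)). Then H_{p−1}(rev(𝐬)) ≡ (−1)^{|𝐬|} · sgn(𝐬) · H_{p−1}(𝐬) (mod p) and H^⋆_{p−1}(rev(𝐬)) ≡ (−1)^{|𝐬|} · sgn(𝐬) · H^⋆_{p−1}(𝐬) (mod p). -/
open scoped BigOperators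

/-!
The substitution `k ↦ p - k` maps the index chains of `H_{p-1}(rev 𝐬)` bijectively onto
those of `H_{p-1}(𝐬)`, and modulo `p` each factor transforms as
`ε^{p-k}/(p-k)^s ≡ (-1)^s ε · ε^k/k^s`, since `p` is odd and `p - k ≡ -k`. All factors are
`p`-integral, so these termwise congruences multiply and add up to the claim; the same works
for weakly decreasing chains.
-/

open Finset

/-- `∑ f₁(k₁) ⋯ f_d(k_d)` over `n ≥ k₁`, `k_{i+1} ≤ k_i - δ`, all `kᵢ ≥ b`; `δ = 1` gives
strictly and `δ = 0` weakly decreasing chains. -/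
def descChainSum (δ b : ℕ) : ℕ → List (ℕ → ℚ) → ℚ
  | _, [] => 1
  | n, f :: t => ∑ k ∈ Icc b n, f k * descChainSum δ b (k - δ) t

def ascChainSum (δ : ℕ) : ℕ → ℕ → List (ℕ → ℚ) → ℚ
  | _, _, [] => 1
  | m, n, f :: t => ∑ k ∈ Icc m n, f k * ascChainSum δ (k + δ) n t

section ChainSums

variable {δ : ℕ}

theorem descChainSum_append_singleton {b : ℕ} (hb : δ ≤ b) (f : ℕ → ℚ) (l : List (ℕ → ℚ))
    (n : ℕ) :
    descChainSum δ b n (l ++ [f]) = ∑ k ∈ Icc b n, descChainSum δ (k + δ) n l * f k := by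
  induction l generalizing n with
  | nil => simp [descChainSum]
  | cons g t ih =>
    simp only [List.cons_append, descChainSum, ih, mul_sum, sum_mul]
    refine (sum_comm' fun j k => ?_).trans
      (sum_congr rfl fun k _ => sum_congr rfl fun j _ => ?_)
    · simp only [mem_Icc]
      omega
    · ring

theorem descChainSum_reverse_eq_ascChainSum (n : ℕ) (l : List (ℕ → ℚ)) {m : ℕ}
    (hm : δ ≤ m) :
    descChainSum δ m n l.reverse = ascChainSum δ m n l := by
  induction l generalizing m with
  | nil => rfl
  | cons f t ih =>
    rw [List.reverse_cons, descChainSum_append_singleton hm, ascChainSum]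
    exact sum_congr rfl fun k _ => by rw [ih (Nat.le_add_left δ k), mul_comm]

theorem ascChainSum_eq_descChainSum_reflect (n : ℕ) (l : List (ℕ → ℚ)) (m : ℕ) :
    ascChainSum δ m n l = descChainSum δ 1 (n + 1 - m) (l.map fun f k => f (n + 1 - k)) := by
  induction l generalizing m with
  | nil => rfl
  | cons f t ih =>
    simp only [ascChainSum, List.map_cons, descChainSum]
    refine sum_nbij' (n + 1 - ·) (n + 1 - ·) ?_ ?_ ?_ ?_ fun k hk => ?_
    iterate 4 intro k hk; simp only [mem_Icc] at hk ⊢; omega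
    rw [mem_Icc] at hk
    rw [ih, Nat.sub_sub_self (by omega), Nat.sub_sub]

/-- Reflecting `k ↦ n + 1 - k` turns decreasing chains in `[1, n]` into increasing ones. -/
theorem descChainSum_reverse (hδ : δ ≤ 1) (n : ℕ) (l : List (ℕ → ℚ)) :
    descChainSum δ 1 n l.reverse = descChainSum δ 1 n (l.map fun f k => f (n + 1 - k)) := by
  rw [descChainSum_reverse_eq_ascChainSum n l hδ, ascChainSum_eq_descChainSum_reflect,
    Nat.add_sub_cancel]

theorem descChainSum_map_mul {α : Type*} (c : α → ℚ) (F : α → ℕ → ℚ) (b : ℕ) (l : List α)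
    (n : ℕ) :
    descChainSum δ b n (l.map fun x k => c x * F x k) =
      (l.map c).prod * descChainSum δ b n (l.map F) := by
  induction l generalizing n with
  | nil => simp [descChainSum]
  | cons x t ih =>
    simp only [List.map_cons, descChainSum, ih, List.prod_cons, mul_sum]
    exact sum_congr rfl fun k _ => by ring

end ChainSums

def amhsTerm (x : ℕ × ℚ) (k : ℕ) : ℚ := x.2 ^ k / (k : ℚ) ^ x.1

theorem AMHS_eq_descChainSum (l : List (ℕ × ℚ)) (n : ℕ) :
    AMHS n l = descChainSum 1 1 n (l.map amhsTerm) := by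
  induction l generalizing n with
  | nil => rfl
  | cons x t ih => simp only [AMHS, ih]; rfl

theorem AMHSstar_eq_descChainSum (l : List (ℕ × ℚ)) (n : ℕ) :
    AMHSstar n l = descChainSum 0 1 n (l.map amhsTerm) := by
  induction l generalizing n with
  | nil => rfl
  | cons x t ih => simp only [AMHSstar, ih]; rfl

section PadicEstimates

variable {p : ℕ} [Fact p.Prime]

theorem padicNorm_le_one_of_sub_le {a c : ℚ} (ha : padicNorm p a ≤ 1)
    (hac : padicNorm p (a - c) ≤ (p : ℚ)⁻¹) : padicNorm p c ≤ 1 := by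
  have hp : (p : ℚ)⁻¹ ≤ 1 :=
    inv_le_one_of_one_le₀ (by exact_mod_cast (Fact.out : p.Prime).one_le)
  calc padicNorm p c = padicNorm p (a - (a - c)) := by rw [sub_sub_cancel]
    _ ≤ 1 := padicNorm.sub.trans (max_le ha (hac.trans hp))

theorem padicNorm_mul_sub_mul_le {a b c d r : ℚ} (ha : padicNorm p a ≤ 1)
    (hd : padicNorm p d ≤ 1) (hac : padicNorm p (a - c) ≤ r) (hbd : padicNorm p (b - d) ≤ r) :
    padicNorm p (a * b - c * d) ≤ r := by
  rw [show a * b - c * d = a * (b - d) + (a - c) * d by ring]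
  refine padicNorm.nonarchimedean.trans (max_le ?_ ?_) <;> rw [padicNorm.mul]
  · exact mul_le_of_le_one_left (padicNorm.nonneg _) ha |>.trans hbd
  · exact mul_le_of_le_one_right (padicNorm.nonneg _) hd |>.trans hac

variable {δ b : ℕ}

theorem padicNorm_descChainSum_le_one {l : List (ℕ → ℚ)} {n : ℕ}
    (hl : ∀ f ∈ l, ∀ k ∈ Icc b n, padicNorm p (f k) ≤ 1) :
    padicNorm p (descChainSum δ b n l) ≤ 1 := by
  induction l generalizing n with
  | nil => simp [descChainSum]
  | cons f t ih =>
    refine padicNorm.sum_le' (fun k hk => ?_) zero_le_one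
    have hsub : Icc b (k - δ) ⊆ Icc b n :=
      Icc_subset_Icc_right ((Nat.sub_le k δ).trans (mem_Icc.mp hk).2)
    rw [padicNorm.mul]
    exact mul_le_one₀ (hl f List.mem_cons_self k hk) (padicNorm.nonneg _)
      (ih fun g hg j hj => hl g (List.mem_cons_of_mem f hg) j (hsub hj))

theorem padicNorm_descChainSum_sub_le {α : Type*} {F G : α → ℕ → ℚ} {l : List α} {n : ℕ}
    (hF : ∀ x ∈ l, ∀ k ∈ Icc b n, padicNorm p (F x k) ≤ 1)
    (hFG : ∀ x ∈ l, ∀ k ∈ Icc b n, padicNorm p (F x k - G x k) ≤ (p : ℚ)⁻¹) :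
    padicNorm p (descChainSum δ b n (l.map F) - descChainSum δ b n (l.map G)) ≤ (p : ℚ)⁻¹ := by
  induction l generalizing n with
  | nil => simp [descChainSum]
  | cons x t ih =>
    simp only [List.map_cons, descChainSum, ← sum_sub_distrib]
    refine padicNorm.sum_le' (fun k hk => ?_) (by positivity)
    have hsub : Icc b (k - δ) ⊆ Icc b n :=
      Icc_subset_Icc_right ((Nat.sub_le k δ).trans (mem_Icc.mp hk).2)
    have hF' : ∀ y ∈ t, ∀ j ∈ Icc b (k - δ), padicNorm p (F y j) ≤ 1 := fun y hy j hj =>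
      hF y (List.mem_cons_of_mem x hy) j (hsub hj)
    have hFG' : ∀ y ∈ t, ∀ j ∈ Icc b (k - δ), padicNorm p (F y j - G y j) ≤ (p : ℚ)⁻¹ :=
      fun y hy j hj => hFG y (List.mem_cons_of_mem x hy) j (hsub hj)
    have hG : ∀ g ∈ t.map G, ∀ j ∈ Icc b (k - δ), padicNorm p (g j) ≤ 1 := by
      simpa using fun y hy j hj => padicNorm_le_one_of_sub_le (hF' y hy j hj) (hFG' y hy j hj)
    exact padicNorm_mul_sub_mul_le (hF x List.mem_cons_self k hk)
      (padicNorm_descChainSum_le_one hG) (hFG x List.mem_cons_self k hk) (ih hF' hFG')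

end PadicEstimates

theorem padicNorm_sign_pow (p : ℕ) {ε : ℚ} (hε : ε = 1 ∨ ε = -1) (j : ℕ) :
    padicNorm p (ε ^ j) = 1 := by
  obtain h | h : ε ^ j = 1 ∨ ε ^ j = -1 := by
    rcases hε with rfl | rfl
    · simp
    · exact neg_one_pow_eq_or ℚ j
  all_goals simp [h]

theorem sign_pow_sub_of_odd {ε : ℚ} (hε : ε = 1 ∨ ε = -1) {n k : ℕ} (hn : Odd n)
    (hk : k ≤ n) :
    ε ^ (n - k) = ε * ε ^ k := by
  rcases hε with rfl | rfl
  · simp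
  · have := hn.neg_one_pow (α := ℚ)
    rw [← Nat.sub_add_cancel hk, pow_add] at this
    rcases neg_one_pow_eq_or ℚ k with h | h <;> rw [h] at this ⊢ <;> linarith

section Terms

variable {p : ℕ} [Fact p.Prime]

theorem padicNorm_inv_pow_sub_inv_pow_le {a b : ℤ} (hab : (p : ℤ) ∣ a - b) (ha : ¬(p : ℤ) ∣ a)
    (s : ℕ) : padicNorm p (((a : ℚ) ^ s)⁻¹ - ((b : ℚ) ^ s)⁻¹) ≤ (p : ℚ)⁻¹ := by
  have hpp : Prime (p : ℤ) := Nat.prime_iff_prime_int.mp Fact.out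
  have hb : ¬(p : ℤ) ∣ b := fun hb => ha (by simpa using dvd_add hab hb)
  have hunit : ¬(p : ℤ) ∣ a ^ s * b ^ s := by
    rw [hpp.dvd_mul]
    exact fun h => h.elim (ha <| hpp.dvd_of_dvd_pow ·) (hb <| hpp.dvd_of_dvd_pow ·)
  have hnum : ((p ^ 1 : ℕ) : ℤ) ∣ b ^ s - a ^ s := by
    simpa using (dvd_neg.mpr hab).trans (by simpa using sub_dvd_pow_sub_pow b a s)
  have ha0 : (a : ℚ) ≠ 0 := Int.cast_ne_zero.mpr (by rintro rfl; exact ha (dvd_zero _))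
  have hb0 : (b : ℚ) ≠ 0 := Int.cast_ne_zero.mpr (by rintro rfl; exact hb (dvd_zero _))
  calc padicNorm p (((a : ℚ) ^ s)⁻¹ - ((b : ℚ) ^ s)⁻¹)
      = padicNorm p (((b ^ s - a ^ s : ℤ) : ℚ) / ((a ^ s * b ^ s : ℤ) : ℚ)) := by
        congr 1; push_cast; field_simp
    _ ≤ (p : ℚ)⁻¹ := by
        rw [padicNorm.div, (padicNorm.int_eq_one_iff _).mpr hunit, div_one]
        simpa using padicNorm.dvd_iff_norm_le.mp hnum

theorem padicNorm_amhsTerm_le_one {x : ℕ × ℚ} (hx : x.2 = 1 ∨ x.2 = -1) {k : ℕ}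
    (hk : ¬p ∣ k) : padicNorm p (amhsTerm x k) ≤ 1 := by
  rw [amhsTerm, padicNorm.div, padicNorm_sign_pow p hx, ← Nat.cast_pow,
    (padicNorm.nat_eq_one_iff _).mpr fun h => hk ((Fact.out : p.Prime).dvd_of_dvd_pow h)]
  norm_num

/-- Since `p - k ≡ -k (mod p)` and `ε ^ (p - k) = ε * ε ^ k` for odd `p`. -/
theorem padicNorm_amhsTerm_reflect_sub_le (hp : Odd p) {x : ℕ × ℚ} (hx : x.2 = 1 ∨ x.2 = -1)
    {k : ℕ} (hk : k ∈ Icc 1 (p - 1)) :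
    padicNorm p (amhsTerm x (p - k) - (-1) ^ x.1 * x.2 * amhsTerm x k) ≤ (p : ℚ)⁻¹ := by
  obtain ⟨s, ε⟩ := x
  rw [mem_Icc] at hk
  have hkp : k ≤ p := by omega
  have hdiff : amhsTerm (s, ε) (p - k) - (-1) ^ s * ε * amhsTerm (s, ε) k =
      ε ^ (p - k) * (((((p - k : ℕ) : ℤ) : ℚ) ^ s)⁻¹ - (((-k : ℤ) : ℚ) ^ s)⁻¹) := by
    simp only [amhsTerm, sign_pow_sub_of_odd hx hp hkp]
    push_cast
    rw [neg_pow (k : ℚ), mul_inv, ← inv_pow (-1 : ℚ), inv_neg_one]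
    ring
  rw [hdiff, padicNorm.mul, padicNorm_sign_pow p hx, one_mul]
  refine padicNorm_inv_pow_sub_inv_pow_le ⟨1, by push_cast [Nat.cast_sub hkp]; ring⟩ ?_ s
  exact Int.natCast_dvd_natCast.not.mpr (Nat.not_dvd_of_pos_of_lt (by omega) (by omega))

end Terms

theorem padicNorm_descChainSum_reverse_sub_le {p : ℕ} [Fact p.Prime] (hp : Odd p) {δ : ℕ}
    (hδ : δ ≤ 1) {s : List (ℕ × ℚ)} (hs : ∀ x ∈ s, x.2 = 1 ∨ x.2 = -1) :
    padicNorm p (descChainSum δ 1 (p - 1) (s.reverse.map amhsTerm) -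
      (s.map fun x => (-1) ^ x.1 * x.2).prod * descChainSum δ 1 (p - 1) (s.map amhsTerm)) ≤
      (p : ℚ)⁻¹ := by
  have hp1 : p - 1 + 1 = p := Nat.sub_add_cancel (Fact.out : p.Prime).one_le
  rw [List.map_reverse, descChainSum_reverse hδ, List.map_map, hp1, ← descChainSum_map_mul]
  refine padicNorm_descChainSum_sub_le (fun x hx k hk => ?_) fun x hx k hk =>
    padicNorm_amhsTerm_reflect_sub_le hp (hs x hx) hk
  rw [mem_Icc] at hk
  exact padicNorm_amhsTerm_le_one (hs x hx) (Nat.not_dvd_of_pos_of_lt (by omega) (by omega))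

theorem ratModEq_of_padicNorm_sub_le {p : ℕ} [Fact p.Prime] {a b : ℚ}
    (h : padicNorm p (a - b) ≤ (p : ℚ)⁻¹) : RatModEq p 1 a b := by
  rcases eq_or_ne a b with hab | hab
  · exact Or.inl hab
  · rw [padicNorm.eq_zpow_of_nonzero (sub_ne_zero.mpr hab), ← zpow_neg_one,
      zpow_le_zpow_iff_right₀ (by exact_mod_cast (Fact.out : p.Prime).one_lt)] at h
    exact Or.inr (by omega)

theorem prod_map_neg_one_pow_mul (l : List (ℕ × ℚ)) :
    (l.map fun x => (-1) ^ x.1 * x.2).prod =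
      (-1 : ℚ) ^ (l.map Prod.fst).sum * (l.map Prod.snd).prod := by
  induction l with
  | nil => simp
  | cons x t ih =>
    simp only [List.map_cons, List.prod_cons, List.sum_cons, ih, pow_add]
    ring

/-- Theorem `thm:reversal`: reversal relations mod `p`.
For an odd prime `p` and a signed composition `𝐬`:
`H_{p-1}(rev 𝐬) ≡ (-1)^{|𝐬|} sgn(𝐬) H_{p-1}(𝐬) (mod p)` and likewise for `H⋆`. -/
theorem reversal_mod_p (p : ℕ) (hp : p.Prime) (hodd : Odd p)
    (s : List (ℕ × ℚ)) (hs : IsSignedComp s) :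
    RatModEq p 1 (AMHS (p - 1) s.reverse)
      ((-1 : ℚ) ^ ((s.map Prod.fst).sum) * (s.map Prod.snd).prod * AMHS (p - 1) s) ∧
    RatModEq p 1 (AMHSstar (p - 1) s.reverse)
      ((-1 : ℚ) ^ ((s.map Prod.fst).sum) * (s.map Prod.snd).prod * AMHSstar (p - 1) s) := by
  have := Fact.mk hp
  have hsign : ∀ x ∈ s, x.2 = 1 ∨ x.2 = -1 := fun x hx => (hs x hx).2
  simp only [AMHS_eq_descChainSum, AMHSstar_eq_descChainSum, ← prod_map_neg_one_pow_mul]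
  exact ⟨ratModEq_of_padicNorm_sub_le (padicNorm_descChainSum_reverse_sub_le hodd le_rfl hsign),
    ratModEq_of_padicNorm_sub_le (padicNorm_descChainSum_reverse_sub_le hodd zero_le_one hsign)⟩
end

section
/- For every integer n ≥ 0 and every signed composition 𝐬 of depth d with reversal rev(𝐬): H^⋆_n(rev(𝐬)) = (−1)^d · Σ (−1)^r · H_n(𝐬_1)·H_n(𝐬_2)⋯H_n(𝐬_r), and H_n(rev(𝐬)) = (−1)^d · Σ (−1)^r · H^⋆_n(𝐬_1)·H^⋆_n(𝐬_2)⋯H^⋆_n(𝐬_r), where both sums range over all decompositions of 𝐬 as a concatenation 𝐬 = 𝐬_1 ⊔ 𝐬_2 ⊔ ⋯ ⊔ 𝐬_r of nonempty consecutive blocks (r = 1,…,d). -/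
open scoped BigOperators

/-- All decompositions of a list into consecutive nonempty blocks, i.e. all ways
to write `𝐬 = 𝐬₁ ⊔ 𝐬₂ ⊔ ⋯ ⊔ 𝐬ᵣ` with each `𝐬ⱼ` nonempty. -/
def blockDecomps {α : Type*} : List α → List (List (List α))
  | [] => [[]]
  | a :: s => (blockDecomps s).flatMap (fun bs =>
      match bs with
      | [] => [[[a]]]
      | b :: bs' => [[a] :: b :: bs', (a :: b) :: bs'])

/-!
Splitting off the summation index attached to `s₁`, the alternating sum
`Σⱼ (-1)ʲ H_m(s₁ ⋯ sⱼ) H⋆_n(s_d ⋯ sⱼ₊₁)` telescopes, by induction on the depth, to the star sum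
of `rev 𝐬` with all indices in `(m, n]`; at `m = n` it vanishes. Solving for the `j = 0` term
expresses `H⋆_n(rev 𝐬)` through `H_n` of the first blocks and `H⋆_n` of shorter reversed tails,
which is the first-block recursion of the signed sum over block decompositions. Exchanging
strict and weak inequalities gives the dual identity; nested sums with index gap `δ` and
`1 - δ` treat both at once.
-/

theorem Finset.sum_Icc_add_one_eq_sub {R : Type*} [AddCommGroup R] (g : ℕ → R) {m n : ℕ}
    (h : m ≤ n) : ∑ k ∈ Icc (m + 1) n, g k = ∑ k ∈ Icc 1 n, g k - ∑ k ∈ Icc 1 m, g k := by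
  have hIcc : ∀ b, Icc 1 b = Ioc 0 b := Icc_add_one_left_eq_Ioc 0
  rw [eq_sub_iff_add_eq', Icc_add_one_left_eq_Ioc, hIcc, hIcc]
  exact sum_Ioc_consecutive g (Nat.zero_le m) h

section NestedSum

variable {α R : Type*} [CommRing R]

/-- `Σ f a₁ k₁ ⋯ f a_d k_d` over `n ≥ k₁`, `kᵢ₊₁ + δ ≤ kᵢ` and all `kᵢ ≥ L`; the truncated
subtraction `k - δ` is harmless once `δ ≤ L`. -/
def nestedSum (f : α → ℕ → R) (δ L : ℕ) : ℕ → List α → R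
  | _, [] => 1
  | n, a :: t => ∑ k ∈ Finset.Icc L n, f a k * nestedSum f δ L (k - δ) t

variable (f : α → ℕ → R) {δ δ' : ℕ}

theorem nestedSum_of_lt {L n : ℕ} (h : n < L) {s : List α} (hs : s ≠ []) :
    nestedSum f δ L n s = 0 := by
  obtain ⟨a, t, rfl⟩ := List.exists_cons_of_ne_nil hs
  simp [nestedSum, Finset.Icc_eq_empty_of_lt h]

theorem nestedSum_append_singleton {L : ℕ} (hL : δ ≤ L) (a : α) (u : List α) (n : ℕ) :
    nestedSum f δ L n (u ++ [a]) = ∑ k ∈ Finset.Icc L n, f a k * nestedSum f δ (k + δ) n u := by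
  induction u generalizing n with
  | nil => simp [nestedSum]
  | cons b u ih =>
    simp only [List.cons_append, nestedSum, ih, Finset.mul_sum]
    rw [Finset.sum_comm' (t' := Finset.Icc L n) (s' := fun k => Finset.Icc (k + δ) n)]
    · exact Finset.sum_congr rfl fun _ _ => Finset.sum_congr rfl fun _ _ => by ring
    · intro j k
      simp only [Finset.mem_Icc]
      omega

theorem sum_alternating_nestedSum_take_mul_drop (hδ : δ + δ' = 1) (s : List α) {m n : ℕ}
    (hmn : m ≤ n) :
    ∑ j ∈ Finset.range (s.length + 1),
        (-1) ^ j * nestedSum f δ 1 m (s.take j) * nestedSum f δ' 1 n (s.drop j).reverse =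
      nestedSum f δ' (m + 1) n s.reverse := by
  induction s generalizing m with
  | nil => simp [nestedSum]
  | cons a t ih =>
    have hstep : ∀ k ∈ Finset.Icc 1 m, ∑ j ∈ Finset.range (t.length + 1),
        (-1) ^ j * nestedSum f δ 1 (k - δ) (t.take j) * nestedSum f δ' 1 n (t.drop j).reverse =
          nestedSum f δ' (k + δ') n t.reverse := by
      intro k hk
      rw [Finset.mem_Icc] at hk
      rw [ih (by omega)]
      congr 1
      omega
    rw [List.reverse_cons, nestedSum_append_singleton f (show δ' ≤ m + 1 by omega),
      Finset.sum_Icc_add_one_eq_sub _ hmn, ← Finset.sum_congr rfl fun k hk =>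
        congrArg (f a k * ·) (hstep k hk), List.length_cons, Finset.sum_range_succ']
    simp only [List.take_succ_cons, List.drop_succ_cons, List.take_zero, List.drop_zero,
      List.reverse_cons, nestedSum_append_singleton f (show δ' ≤ 1 by omega), nestedSum,
      pow_zero, mul_one, one_mul, Finset.mul_sum, Finset.sum_mul]
    rw [Finset.sum_comm, sub_eq_neg_add, ← Finset.sum_neg_distrib]
    congr 1
    exact Finset.sum_congr rfl fun _ _ => by
      rw [← Finset.sum_neg_distrib]
      exact Finset.sum_congr rfl fun _ _ => by ring

end NestedSum

section BlockDecomps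

variable {α R : Type*} [CommRing R] (v : List α → R)

def signedBlockSum (s : List α) : R :=
  ((blockDecomps s).map (fun bs => (-1) ^ bs.length * (bs.map v).prod)).sum

def prefixedBlockTerm (p : List α) : List (List α) → R
  | [] => 0
  | b :: bs => (-1) ^ (bs.length + 1) * (v (p ++ b) * (bs.map v).prod)

/-- The signed sum over the decompositions of `p ++ s` whose first block is `p` extended by
at least one element of `s`. -/
def prefixedBlockSum (p s : List α) : R :=
  ((blockDecomps s).map (prefixedBlockTerm v p)).sum

@[simp]
theorem signedBlockSum_nil : signedBlockSum v [] = 1 := by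
  simp [signedBlockSum, blockDecomps]

theorem prefixedBlockSum_cons (p : List α) (a : α) (s : List α) :
    prefixedBlockSum v p (a :: s) =
      -v (p ++ [a]) * signedBlockSum v s + prefixedBlockSum v (p ++ [a]) s := by
  simp only [prefixedBlockSum, signedBlockSum, blockDecomps, List.flatMap_def, List.map_flatten,
    List.map_map, List.sum_flatten, ← List.sum_map_mul_left, ← List.sum_map_add]
  refine congrArg List.sum (List.map_congr_left fun bs _ => ?_)
  cases bs with
  | nil => simp [prefixedBlockTerm]
  | cons b bs =>
    simp only [Function.comp_apply, List.map_cons, List.map_nil, List.sum_cons, List.sum_nil,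
      prefixedBlockTerm, List.length_cons, List.prod_cons, List.append_assoc, List.cons_append,
      List.nil_append]
    ring

theorem prefixedBlockSum_eq_sum (s p : List α) :
    prefixedBlockSum v p s = -∑ j ∈ Finset.range s.length,
      v (p ++ s.take (j + 1)) * signedBlockSum v (s.drop (j + 1)) := by
  induction s generalizing p with
  | nil => simp [prefixedBlockSum, blockDecomps, prefixedBlockTerm]
  | cons a s ih =>
    rw [prefixedBlockSum_cons, ih, List.length_cons, Finset.sum_range_succ']
    simp [List.take_succ_cons]

theorem signedBlockSum_cons_eq_prefixedBlockSum_nil (a : α) (s : List α) :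
    signedBlockSum v (a :: s) = prefixedBlockSum v [] (a :: s) := by
  simp only [prefixedBlockSum, signedBlockSum, blockDecomps, List.flatMap_def, List.map_flatten,
    List.map_map]
  refine congrArg _ (congrArg _ (List.map_congr_left fun bs _ => ?_))
  cases bs <;> simp [prefixedBlockTerm]

theorem signedBlockSum_eq_sum {s : List α} (hs : s ≠ []) :
    signedBlockSum v s = -∑ j ∈ Finset.range s.length,
      v (s.take (j + 1)) * signedBlockSum v (s.drop (j + 1)) := by
  obtain ⟨a, t, rfl⟩ := List.exists_cons_of_ne_nil hs
  rw [signedBlockSum_cons_eq_prefixedBlockSum_nil, prefixedBlockSum_eq_sum]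
  simp

end BlockDecomps

theorem nestedSum_reverse_eq_signedBlockSum {α R : Type*} [CommRing R] (f : α → ℕ → R)
    {δ δ' : ℕ} (hδ : δ + δ' = 1) (n : ℕ) (s : List α) :
    nestedSum f δ' 1 n s.reverse = (-1) ^ s.length * signedBlockSum (nestedSum f δ 1 n) s := by
  rcases eq_or_ne s [] with rfl | hs
  · simp [nestedSum]
  have hvanish := sum_alternating_nestedSum_take_mul_drop f hδ s (le_refl n)
  rw [nestedSum_of_lt f n.lt_succ_self (List.reverse_ne_nil_iff.mpr hs),
    Finset.sum_range_succ'] at hvanish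
  have hterm : ∀ j ∈ Finset.range s.length,
      (-1) ^ (j + 1) * nestedSum f δ 1 n (s.take (j + 1)) *
          nestedSum f δ' 1 n (s.drop (j + 1)).reverse =
        (-1) ^ s.length * (nestedSum f δ 1 n (s.take (j + 1)) *
          signedBlockSum (nestedSum f δ 1 n) (s.drop (j + 1))) := by
    intro j hj
    have hsign : ((-1) ^ (j + 1) * (-1) ^ (s.length - (j + 1)) : R) = (-1) ^ s.length := by
      rw [← pow_add]
      congr 1
      rw [Finset.mem_range] at hj
      omega
    rw [nestedSum_reverse_eq_signedBlockSum f hδ n (s.drop (j + 1)), List.length_drop]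
    linear_combination (nestedSum f δ 1 n (s.take (j + 1)) *
      signedBlockSum (nestedSum f δ 1 n) (s.drop (j + 1))) * hsign
  rw [Finset.sum_congr rfl hterm, ← Finset.mul_sum] at hvanish
  rw [signedBlockSum_eq_sum _ hs]
  simp only [pow_zero, List.take_zero, List.drop_zero, nestedSum, one_mul] at hvanish
  linear_combination hvanish
termination_by s.length
decreasing_by
  rw [Finset.mem_range] at hj
  simp only [List.length_drop]
  omega

def harmonicWeight (p : ℕ × ℚ) (k : ℕ) : ℚ := p.2 ^ k / (k : ℚ) ^ p.1

theorem AMHS_eq_nestedSum (n : ℕ) : AMHS n = nestedSum harmonicWeight 1 1 n := by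
  funext s
  induction s generalizing n with
  | nil => rfl
  | cons p t ih => simp only [AMHS, nestedSum, harmonicWeight, ih]

theorem AMHSstar_eq_nestedSum (n : ℕ) : AMHSstar n = nestedSum harmonicWeight 0 1 n := by
  funext s
  induction s generalizing n with
  | nil => rfl
  | cons p t ih => simp only [AMHSstar, nestedSum, harmonicWeight, ih, Nat.sub_zero]

theorem concatenation_relation_general (n : ℕ) (s : List (ℕ × ℚ)) :
    AMHSstar n s.reverse = (-1 : ℚ) ^ s.length *
      ((blockDecomps s).map
        (fun bs => (-1 : ℚ) ^ bs.length * (bs.map (AMHS n)).prod)).sum ∧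
    AMHS n s.reverse = (-1 : ℚ) ^ s.length *
      ((blockDecomps s).map
        (fun bs => (-1 : ℚ) ^ bs.length * (bs.map (AMHSstar n)).prod)).sum := by
  rw [AMHS_eq_nestedSum, AMHSstar_eq_nestedSum]
  exact ⟨nestedSum_reverse_eq_signedBlockSum _ (by norm_num) n s,
    nestedSum_reverse_eq_signedBlockSum _ (by norm_num) n s⟩

/-- equations `equ:FMZSV=concatFMZV` and `equ:FMZV=concatFMZSV`
at the level of partial sums: for a signed composition `𝐬` of depth `d`,
`H⋆_n(rev 𝐬) = (-1)^d Σ_{𝐬₁⊔⋯⊔𝐬ᵣ=𝐬} (-1)^r H_n(𝐬₁)⋯H_n(𝐬ᵣ)` and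
`H_n(rev 𝐬) = (-1)^d Σ_{𝐬₁⊔⋯⊔𝐬ᵣ=𝐬} (-1)^r H⋆_n(𝐬₁)⋯H⋆_n(𝐬ᵣ)`. -/
theorem concatenation_relation (n : ℕ) (s : List (ℕ × ℚ)) (hs : IsSignedComp s) :
    AMHSstar n s.reverse = (-1 : ℚ) ^ s.length *
      ((blockDecomps s).map
        (fun bs => (-1 : ℚ) ^ bs.length * (bs.map (AMHS n)).prod)).sum ∧
    AMHS n s.reverse = (-1 : ℚ) ^ s.length *
      ((blockDecomps s).map
        (fun bs => (-1 : ℚ) ^ bs.length * (bs.map (AMHSstar n)).prod)).sum :=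
  concatenation_relation_general n s
end

section
/- Let ℓ ≥ 1 and let r_1,…,r_ℓ, t_1,…,t_ℓ be positive integers. Set 𝐬 = (r_1, {1}^{t_1−1}, r_2+1, {1}^{t_2−1}, …, r_ℓ+1, {1}^{t_ℓ−1}) and 𝐬^∨ = ({1}^{r_1−1}, t_1+1, {1}^{r_2−1}, t_2+1, …, t_{ℓ−1}+1, {1}^{r_ℓ−1}, t_ℓ), where {1}^m denotes 1 repeated m times. Then for all sufficiently large primes p: H^⋆_{p−1}(𝐬) ≡ −H^⋆_{p−1}(𝐬^∨) (mod p). -/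
open scoped BigOperators

/-- The composition `𝐬 = (r₁, {1}^{t₁-1}, r₂+1, {1}^{t₂-1}, …, r_ℓ+1, {1}^{t_ℓ-1})`. -/
def vComp (ℓ : ℕ) (r t : ℕ → ℕ) : List ℕ :=
  (List.range ℓ).flatMap
    (fun j => (if j = 0 then r 0 else r j + 1) :: List.replicate (t j - 1) 1)

/-- The v-dual `𝐬^∨ = ({1}^{r₁-1}, t₁+1, {1}^{r₂-1}, t₂+1, …, t_{ℓ-1}+1, {1}^{r_ℓ-1}, t_ℓ)`. -/
def vDual (ℓ : ℕ) (r t : ℕ → ℕ) : List ℕ :=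
  (List.range ℓ).flatMap
    (fun j => List.replicate (r j - 1) 1 ++ [if j = ℓ - 1 then t j else t j + 1])

/-!
For a composition `(a, B)` the star sums obey the exact identity
`H⋆_n((a, B)^∨) = ∑_{k=1}^n (-1)^(k+1) C(n,k) k^(-a) H⋆_k(B)`, where `∨` is Hoffman duality.
It is proved by reading `(a, B)` one unit at a time: a unit that continues a part of `(a, B)`
closes a part of the dual and contributes a factor `1/u` summed over `u`
(via `∑_{m=k}^n C(m,k)/m = C(n,k)/k`), while a unit that opens a new part of `(a, B)`
enlarges the current part of the dual (via the partial alternating sums of binomial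
coefficients). For `n = p - 1` we have `(-1)^k C(p-1,k) ≡ 1 (mod p)`, so the right-hand side is
congruent to `-∑ k^(-a) H⋆_k(B) = -H⋆_{p-1}(a, B)`, every term being `p`-integral. The
composition `𝐬^∨` of the statement is the Hoffman dual of `𝐬`.
-/

open Finset

theorem sum_Icc_choose_div (n k : ℕ) :
    ∑ m ∈ Icc (k + 1) n, (m.choose (k + 1) : ℚ) / m = n.choose (k + 1) / (k + 1) := by
  induction n with
  | zero => simp
  | succ n ih =>
    rcases Nat.lt_or_ge n k with h | h
    · rw [Icc_eq_empty (by omega), Nat.choose_eq_zero_of_lt (by omega)]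
      simp
    · have hmul : ((n + 1 : ℕ) : ℚ) * n.choose k = (n + 1).choose (k + 1) * (k + 1) := by
        exact_mod_cast Nat.add_one_mul_choose_eq n k
      have hpascal : ((n + 1).choose (k + 1) : ℚ) = n.choose k + n.choose (k + 1) := by
        exact_mod_cast Nat.choose_succ_succ' n k
      rw [sum_Icc_succ_top (by omega), ih]
      field_simp
      push_cast at hmul ⊢
      linear_combination -(↑n + 1 : ℚ) * hpascal - hmul

theorem Int.alternating_sum_Icc_choose (n i : ℕ) :
    ∑ k ∈ Icc (i + 1) (n + 1), ((-1) ^ (k + 1) * (n + 1).choose k : ℤ)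
      = (-1) ^ i * n.choose i := by
  rcases Nat.lt_or_ge n i with h | h
  · rw [Icc_eq_empty (by omega), Nat.choose_eq_zero_of_lt h]
    simp
  have hsplit := sum_range_add_sum_Ico (fun k => ((-1) ^ k * (n + 1).choose k : ℤ))
    (show i + 1 ≤ n + 2 by omega)
  rw [Int.alternating_sum_range_choose_eq_choose, Int.alternating_sum_range_choose_of_ne
    (Nat.succ_ne_zero n)] at hsplit
  rw [← Ico_add_one_right_eq_Icc, show n + 1 + 1 = n + 2 from rfl]
  simp only [pow_succ, mul_neg_one, neg_mul, sum_neg_distrib]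
  linarith

theorem AMHSstar_posComp_cons (n b : ℕ) (C : List ℕ) :
    AMHSstar n (posComp (b :: C)) = ∑ k ∈ Icc 1 n, AMHSstar k (posComp C) / (k : ℚ) ^ b := by
  simp only [posComp, List.map_cons, AMHSstar, one_pow]
  exact sum_congr rfl fun k _ => by ring

def binomialStarSum (n a : ℕ) (B : List ℕ) : ℚ :=
  ∑ k ∈ Icc 1 n, (-1) ^ (k + 1) * n.choose k / (k : ℚ) ^ a * AMHSstar k (posComp B)

theorem binomialStarSum_succ (n a : ℕ) (B : List ℕ) :
    binomialStarSum n (a + 1) B = ∑ u ∈ Icc 1 n, binomialStarSum u a B / u := by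
  simp only [binomialStarSum, sum_div]
  rw [sum_comm' (t' := Icc 1 n) (s' := fun k => Icc k n) (fun u k => by
    simp only [mem_Icc]; omega)]
  refine sum_congr rfl fun k hk => ?_
  obtain ⟨j, rfl⟩ : ∃ j, k = j + 1 := ⟨k - 1, by simp at hk; omega⟩
  have hj : (j + 1 : ℚ) ≠ 0 := by positivity
  calc ((-1) ^ (j + 1 + 1) * n.choose (j + 1) / ((j + 1 : ℕ) : ℚ) ^ (a + 1)
          * AMHSstar (j + 1) (posComp B))
      = (-1) ^ (j + 1 + 1) / ((j + 1 : ℕ) : ℚ) ^ a * AMHSstar (j + 1) (posComp B)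
          * (n.choose (j + 1) / (j + 1)) := by push_cast; field_simp; ring
    _ = _ := by
      rw [← sum_Icc_choose_div, mul_sum]
      exact sum_congr rfl fun u _ => by ring

theorem binomialStarSum_zero_nil {n : ℕ} (hn : 0 < n) : binomialStarSum n 0 [] = 1 := by
  obtain ⟨m, rfl⟩ : ∃ m, n = m + 1 := ⟨n - 1, by omega⟩
  have h := Int.alternating_sum_Icc_choose m 0
  simp only [zero_add, pow_zero, Nat.choose_zero_right, Nat.cast_one, mul_one] at h
  simp only [binomialStarSum, posComp, List.map_nil, AMHSstar, pow_zero, div_one, mul_one]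
  exact_mod_cast h

theorem binomialStarSum_zero_cons {n : ℕ} (hn : 0 < n) (b : ℕ) (C : List ℕ) :
    binomialStarSum n 0 ((b + 1) :: C) = binomialStarSum n b C / n := by
  obtain ⟨m, rfl⟩ : ∃ m, n = m + 1 := ⟨n - 1, by omega⟩
  simp only [binomialStarSum, AMHSstar_posComp_cons, pow_zero, div_one, mul_sum, sum_div]
  rw [sum_comm' (t' := Icc 1 (m + 1)) (s' := fun j => Icc j (m + 1)) (fun k j => by
    simp only [mem_Icc]; omega)]
  refine sum_congr rfl fun j hj => ?_
  obtain ⟨i, rfl⟩ : ∃ i, j = i + 1 := ⟨j - 1, by simp at hj; omega⟩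
  have halt : ∑ k ∈ Icc (i + 1) (m + 1), ((-1) ^ (k + 1) * (m + 1).choose k : ℚ)
      = (-1) ^ i * m.choose i := by exact_mod_cast Int.alternating_sum_Icc_choose m i
  have hmul : ((m + 1 : ℕ) : ℚ) * m.choose i = (m + 1).choose (i + 1) * (i + 1) := by
    exact_mod_cast Nat.add_one_mul_choose_eq m i
  calc ∑ k ∈ Icc (i + 1) (m + 1), (-1) ^ (k + 1) * ((m + 1).choose k : ℚ)
          * (AMHSstar (i + 1) (posComp C) / ((i + 1 : ℕ) : ℚ) ^ (b + 1))
      = (-1) ^ i * m.choose i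
          * (AMHSstar (i + 1) (posComp C) / ((i + 1 : ℕ) : ℚ) ^ (b + 1)) := by
        rw [← sum_mul, halt]
    _ = _ := by
        push_cast at hmul ⊢
        field_simp
        linear_combination (-1) ^ i * AMHSstar (i + 1) (posComp C) * ((i : ℚ) + 1) ^ b * hmul

/-- `hoffmanDualAux e a B` is the Hoffman dual of the composition whose first part still has
`a` units left to read and whose remaining parts are `B`, the dual part under construction
having already reached size `e`. -/
def hoffmanDualAux : ℕ → ℕ → List ℕ → List ℕ
  | e, a + 1, B => e :: hoffmanDualAux 1 a B
  | e, 0, [] => [e]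
  | e, 0, b :: C => hoffmanDualAux (e + 1) (b - 1) C
termination_by _ a B => a + B.sum + B.length

def hoffmanDual : List ℕ → List ℕ
  | [] => []
  | a :: B => hoffmanDualAux 1 (a - 1) B

theorem hoffmanDualAux_one (a : ℕ) (B : List ℕ) :
    hoffmanDualAux 1 a B = List.replicate a 1 ++ hoffmanDualAux 1 0 B := by
  induction a with
  | zero => rfl
  | succ a ih => rw [hoffmanDualAux, ih]; rfl

theorem hoffmanDualAux_replicate_append (m e : ℕ) (L : List ℕ) :
    hoffmanDualAux e 0 (List.replicate m 1 ++ L) = hoffmanDualAux (e + m) 0 L := by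
  induction m generalizing e with
  | zero => rfl
  | succ m ih =>
    rw [List.replicate_succ, List.cons_append, hoffmanDualAux, ih, Nat.add_right_comm]
    rfl

theorem sum_binomialStarSum_div_pow (e a : ℕ) (B : List ℕ) (hB : ∀ b ∈ B, 0 < b) (n : ℕ) :
    ∑ m ∈ Icc 1 n, binomialStarSum m a B / (m : ℚ) ^ e
      = AMHSstar n (posComp (hoffmanDualAux e a B)) := by
  induction e, a, B using hoffmanDualAux.induct generalizing n with
  | case1 e a B ih =>
    rw [hoffmanDualAux, AMHSstar_posComp_cons]
    refine sum_congr rfl fun m _ => ?_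
    rw [binomialStarSum_succ, ← ih hB m]
    simp only [pow_one]
  | case2 e =>
    rw [hoffmanDualAux, AMHSstar_posComp_cons]
    refine sum_congr rfl fun m hm => ?_
    rw [binomialStarSum_zero_nil (by simp at hm; omega)]
    simp [posComp, AMHSstar]
  | case3 e b C ih =>
    obtain ⟨b, rfl⟩ : ∃ c, b = c + 1 := ⟨b - 1, by have := hB b List.mem_cons_self; omega⟩
    rw [hoffmanDualAux, ← ih (fun c hc => hB c (List.mem_cons_of_mem _ hc))]
    refine sum_congr rfl fun m hm => ?_
    rw [binomialStarSum_zero_cons (by simp at hm; omega), pow_succ', Nat.add_sub_cancel, div_div]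

theorem AMHSstar_hoffmanDual_cons {a : ℕ} (ha : 0 < a) (B : List ℕ) (hB : ∀ b ∈ B, 0 < b)
    (n : ℕ) : AMHSstar n (posComp (hoffmanDual (a :: B))) = binomialStarSum n a B := by
  obtain ⟨a, rfl⟩ : ∃ c, a = c + 1 := ⟨a - 1, by omega⟩
  rw [hoffmanDual, ← sum_binomialStarSum_div_pow 1 _ B hB, Nat.add_sub_cancel,
    binomialStarSum_succ]
  simp only [pow_one]

theorem vComp_succ (m : ℕ) (r t : ℕ → ℕ) :
    vComp (m + 1) r t = r 0 :: (List.replicate (t 0 - 1) 1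
      ++ (List.range m).flatMap fun j => (r (j + 1) + 1) :: List.replicate (t (j + 1) - 1) 1) := by
  simp [vComp, List.range_succ_eq_map, List.flatMap_map]

theorem vDual_one (r t : ℕ → ℕ) : vDual 1 r t = List.replicate (r 0 - 1) 1 ++ [t 0] := by
  simp [vDual]

theorem vDual_succ_succ (m : ℕ) (r t : ℕ → ℕ) :
    vDual (m + 2) r t = List.replicate (r 0 - 1) 1
      ++ (t 0 + 1) :: vDual (m + 1) (fun j => r (j + 1)) (fun j => t (j + 1)) := by
  rw [vDual, List.range_succ_eq_map, List.flatMap_cons, List.flatMap_map]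
  simp [vDual]

theorem pos_of_mem_vComp {ℓ : ℕ} {r t : ℕ → ℕ} (hr : 0 < r 0) {b : ℕ}
    (hb : b ∈ vComp ℓ r t) : 0 < b := by
  simp only [vComp, List.mem_flatMap, List.mem_cons, List.mem_replicate] at hb
  obtain ⟨j, -, rfl | ⟨-, rfl⟩⟩ := hb
  · split_ifs <;> omega
  · exact one_pos

theorem hoffmanDual_vComp_succ (m : ℕ) (r t : ℕ → ℕ) (hr : ∀ i < m + 1, 0 < r i)
    (ht : ∀ i < m + 1, 0 < t i) : hoffmanDual (vComp (m + 1) r t) = vDual (m + 1) r t := by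
  induction m generalizing r t with
  | zero =>
    rw [vComp_succ, hoffmanDual, hoffmanDualAux_one, List.range_zero, List.flatMap_nil,
      hoffmanDualAux_replicate_append, Nat.add_sub_cancel' (ht 0 Nat.one_pos), vDual_one,
      hoffmanDualAux]
  | succ m ih =>
    obtain ⟨c, hc⟩ : ∃ c, r 1 = c + 1 := ⟨r 1 - 1, by have := hr 1 (by omega); omega⟩
    rw [vDual_succ_succ, ← ih _ _ (fun i hi => hr (i + 1) (by omega))
      (fun i hi => ht (i + 1) (by omega)), vComp_succ, vComp_succ, hoffmanDual, hoffmanDual,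
      hoffmanDualAux_one, hoffmanDualAux_replicate_append, Nat.add_sub_cancel' (ht 0 (by omega)),
      List.range_succ_eq_map, List.flatMap_cons, List.flatMap_map]
    simp only [hc, List.cons_append, hoffmanDualAux, Nat.add_sub_cancel]

theorem Nat.Prime.neg_one_pow_mul_choose_pred {p : ℕ} (hp : p.Prime) {k : ℕ} (hk : k < p) :
    ((-1) ^ k * (p - 1).choose k : ZMod p) = 1 := by
  induction k with
  | zero => simp
  | succ k ih =>
    have hpascal : ((p - 1 + 1).choose (k + 1) : ZMod p)
        = (p - 1).choose k + (p - 1).choose (k + 1) := by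
      rw [Nat.choose_succ_succ', Nat.cast_add]
    rw [Nat.sub_add_cancel hp.one_le, (ZMod.natCast_eq_zero_iff _ _).mpr
      (hp.dvd_choose_self (Nat.succ_ne_zero k) hk)] at hpascal
    linear_combination (-1) ^ k * hpascal + ih (by omega)

section padic

variable {p : ℕ} [Fact p.Prime]

theorem padicNorm_div_natCast_pow {k : ℕ} (hk : 0 < k) (hkp : k < p) (x : ℚ) (a : ℕ) :
    padicNorm p (x / (k : ℚ) ^ a) = padicNorm p x := by
  have hunit : padicNorm p k = 1 :=
    (padicNorm.nat_eq_one_iff k).mpr (Nat.not_dvd_of_pos_of_lt hk hkp)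
  rw [padicNorm.div, IsAbsoluteValue.abv_pow (padicNorm p), hunit, one_pow, div_one]

theorem padicNorm_AMHSstar_posComp_le_one (L : List ℕ) {n : ℕ} (hn : n < p) :
    padicNorm p (AMHSstar n (posComp L)) ≤ 1 := by
  induction L generalizing n with
  | nil => simp [AMHSstar, posComp]
  | cons b C ih =>
    rw [AMHSstar_posComp_cons]
    refine padicNorm.sum_le' (fun k hk => ?_) zero_le_one
    obtain ⟨hk1, hkn⟩ := mem_Icc.mp hk
    rw [padicNorm_div_natCast_pow hk1 (by omega)]
    exact ih (by omega)

theorem ratModEq_one_of_padicNorm_sub_le {x y : ℚ} (h : padicNorm p (x - y) ≤ (p : ℚ)⁻¹) :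
    RatModEq p 1 x y := by
  by_cases hxy : x - y = 0
  · exact Or.inl (sub_eq_zero.mp hxy)
  refine Or.inr ?_
  rw [padicNorm.eq_zpow_of_nonzero hxy, ← zpow_neg_one,
    zpow_le_zpow_iff_right₀ (by exact_mod_cast (Fact.out : p.Prime).one_lt)] at h
  simpa using h

end padic

theorem AMHSstar_hoffmanDual_modEq {p : ℕ} [hp : Fact p.Prime] {s : List ℕ} (hs : s ≠ [])
    (hpos : ∀ x ∈ s, 0 < x) :
    RatModEq p 1 (AMHSstar (p - 1) (posComp s))
      (-AMHSstar (p - 1) (posComp (hoffmanDual s))) := by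
  obtain ⟨a, B, rfl⟩ := List.exists_cons_of_ne_nil hs
  have ha : 0 < a := hpos a List.mem_cons_self
  have hB : ∀ b ∈ B, 0 < b := fun b hb => hpos b (List.mem_cons_of_mem a hb)
  apply ratModEq_one_of_padicNorm_sub_le
  rw [sub_neg_eq_add, AMHSstar_hoffmanDual_cons ha B hB, AMHSstar_posComp_cons, binomialStarSum,
    ← sum_add_distrib]
  refine padicNorm.sum_le' (fun k hk => ?_) (by positivity)
  obtain ⟨hk1, hkp⟩ := mem_Icc.mp hk
  set c : ℤ := 1 - (-1) ^ k * (p - 1).choose k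
  have hc : padicNorm p c ≤ (p : ℚ)⁻¹ := by
    have hdvd : ((p ^ 1 : ℕ) : ℤ) ∣ c := by
      rw [pow_one, ← ZMod.intCast_zmod_eq_zero_iff_dvd]
      push_cast [c]
      rw [hp.out.neg_one_pow_mul_choose_pred (by omega), sub_self]
    simpa using padicNorm.dvd_iff_norm_le.mp hdvd
  calc padicNorm p (AMHSstar k (posComp B) / (k : ℚ) ^ a
        + (-1) ^ (k + 1) * ((p - 1).choose k) / (k : ℚ) ^ a * AMHSstar k (posComp B))
      = padicNorm p c * padicNorm p (AMHSstar k (posComp B) / (k : ℚ) ^ a) := by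
        rw [← padicNorm.mul]; congr 1; push_cast [c]; ring
    _ ≤ (p : ℚ)⁻¹ * 1 := by
        gcongr
        · exact padicNorm.nonneg _
        · rw [padicNorm_div_natCast_pow hk1 (by omega)]
          exact padicNorm_AMHSstar_posComp_le_one B (by omega)
    _ = (p : ℚ)⁻¹ := mul_one _

/-- Theorem `thm:dualFMZVsuperb=1`, duality of FMZVs:
for all sufficiently large primes `p`, `H⋆_{p-1}(𝐬) ≡ -H⋆_{p-1}(𝐬^∨) (mod p)`. -/
theorem v_duality_mod_p (ℓ : ℕ) (hℓ : 0 < ℓ) (r t : ℕ → ℕ)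
    (hr : ∀ i < ℓ, 0 < r i) (ht : ∀ i < ℓ, 0 < t i) :
    ∃ N, ∀ p ≥ N, Nat.Prime p →
      RatModEq p 1 (AMHSstar (p - 1) (posComp (vComp ℓ r t)))
        (-(AMHSstar (p - 1) (posComp (vDual ℓ r t)))) := by
  obtain ⟨m, rfl⟩ : ∃ m, ℓ = m + 1 := ⟨ℓ - 1, by omega⟩
  refine ⟨0, fun p _ hp => ?_⟩
  have : Fact p.Prime := ⟨hp⟩
  rw [← hoffmanDual_vComp_succ m r t hr ht]
  exact AMHSstar_hoffmanDual_modEq (by simp [vComp_succ]) fun b hb =>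
    pos_of_mem_vComp (hr 0 hℓ) hb
end
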